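/- Let A and B be n×n real symmetric matrices. Suppose that for some index i the eigengap δ̃ = min{λ_{i-1}(A) - λ_i(A), λ_i(A) - λ_{i+1}(A)} is positive (with conventions λ₀(A) = +∞, λ_{n+1}(A) = -∞), and let v_i(A), v_i(B) be corresponding unit eigenvectors. Then min_{s ∈ {±1}} ‖v_i(A) - s·v_i(B)‖² ≤ 8‖A - B‖²/δ̃², where ‖·‖ on matrices is the operator norm. -/

import Mathlib

open Matrix
open scoped Matrix.Norms.L2Operator

-- norm squared of a vector as dot product
lemma dk_norm_sq (n : ℕ) (x : Fin n → ℝ) :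
    ‖(EuclideanSpace.equiv (Fin n) ℝ).symm x‖ ^ 2 = x ⬝ᵥ x := by
  rw [EuclideanSpace.norm_eq]
  rw [Real.sq_sqrt (by positivity)]
  simp [dotProduct, sq]

lemma dk_opnorm (n : ℕ) (M : Matrix (Fin n) (Fin n) ℝ) (x : Fin n → ℝ) :
    (M *ᵥ x) ⬝ᵥ (M *ᵥ x) ≤ ‖M‖ ^ 2 * (x ⬝ᵥ x) := by
  have h := M.l2_opNorm_mulVec ((EuclideanSpace.equiv (Fin n) ℝ).symm x)
  have h2 : ‖(EuclideanSpace.equiv (Fin n) ℝ).symm (M *ᵥ x)‖ ^ 2 ≤ (‖M‖ * ‖(EuclideanSpace.equiv (Fin n) ℝ).symm x‖)^2 := by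
    apply pow_le_pow_left₀ (norm_nonneg _) _ 2
    exact h
  rw [dk_norm_sq] at h2
  rw [mul_pow, dk_norm_sq] at h2
  exact h2

-- completeness: orthonormal rows give resolution of identity
lemma dk_complete {n : ℕ} {v : Fin n → Fin n → ℝ}
    (hv : ∀ j k, v j ⬝ᵥ v k = if j = k then (1 : ℝ) else 0) (x : Fin n → ℝ) :
    ∑ j, (v j ⬝ᵥ x) • v j = x := by
  classical
  set P : Matrix (Fin n) (Fin n) ℝ := Matrix.of v with hP
  have h1 : P * Pᵀ = 1 := by
    ext j k
    simpa [P, Matrix.mul_apply, Matrix.one_apply, dotProduct] using hv j k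
  have h2 : Pᵀ * P = 1 := mul_eq_one_comm.mp h1
  have h3 : Pᵀ *ᵥ (P *ᵥ x) = x := by
    rw [Matrix.mulVec_mulVec, h2, Matrix.one_mulVec]
  funext l
  have := congrFun h3 l
  simpa [Matrix.mulVec, dotProduct, Finset.sum_mul, P, mul_comm] using this

lemma dk_sum_dot {n : ℕ} (f : Fin n → Fin n → ℝ) (x : Fin n → ℝ) :
    (∑ j, f j) ⬝ᵥ x = ∑ j, f j ⬝ᵥ x := by
  simp only [dotProduct, Finset.sum_apply, Finset.sum_mul]
  exact Finset.sum_comm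

lemma dk_E1 {n : ℕ} {v : Fin n → Fin n → ℝ}
    (hv : ∀ j k, v j ⬝ᵥ v k = if j = k then (1 : ℝ) else 0) (x : Fin n → ℝ) :
    ∑ j, (v j ⬝ᵥ x) ^ 2 = x ⬝ᵥ x := by
  have h := congrArg (fun y => y ⬝ᵥ x) (dk_complete hv x)
  rw [← h, dk_sum_dot]
  refine Finset.sum_congr rfl fun j _ => ?_
  rw [smul_dotProduct, smul_eq_mul, sq]

lemma dk_dot_sum {n : ℕ} (f : Fin n → Fin n → ℝ) (x : Fin n → ℝ) :
    x ⬝ᵥ (∑ j, f j) = ∑ j, x ⬝ᵥ f j := by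
  simp only [dotProduct, Finset.sum_apply, Finset.mul_sum]
  exact Finset.sum_comm

lemma dk_E2 {n : ℕ} {M : Matrix (Fin n) (Fin n) ℝ} {lam : Fin n → ℝ}
    {v : Fin n → Fin n → ℝ}
    (hv : ∀ j k, v j ⬝ᵥ v k = if j = k then (1 : ℝ) else 0)
    (heig : ∀ j, M *ᵥ v j = lam j • v j) (x : Fin n → ℝ) :
    x ⬝ᵥ (M *ᵥ x) = ∑ j, lam j * (v j ⬝ᵥ x) ^ 2 := by
  have h := congrArg (fun y => x ⬝ᵥ (M *ᵥ y)) (dk_complete hv x)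
  rw [← h]
  have hsum : M *ᵥ (∑ j, (v j ⬝ᵥ x) • v j) = ∑ j, (v j ⬝ᵥ x) • (lam j • v j) := by
    calc M *ᵥ (∑ j, (v j ⬝ᵥ x) • v j) = M.mulVecLin (∑ j, (v j ⬝ᵥ x) • v j) := rfl
      _ = ∑ j, M.mulVecLin ((v j ⬝ᵥ x) • v j) := map_sum _ _ _
      _ = ∑ j, (v j ⬝ᵥ x) • (lam j • v j) := by
          refine Finset.sum_congr rfl fun j _ => ?_
          rw [_root_.map_smul, Matrix.mulVecLin_apply, heig j]
  rw [hsum, dk_dot_sum]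
  refine Finset.sum_congr rfl fun j _ => ?_
  rw [dotProduct_smul, dotProduct_smul, smul_eq_mul, smul_eq_mul,
    dotProduct_comm]
  ring

lemma dk_dot_self_eq {n : ℕ} (x : Fin n → ℝ) : x ⬝ᵥ x = ∑ l, x l ^ 2 := by
  simp [dotProduct, sq]

lemma dk_dot_self_pos {n : ℕ} {x : Fin n → ℝ} (hx : x ≠ 0) : 0 < x ⬝ᵥ x := by
  rw [dk_dot_self_eq]
  obtain ⟨l, hl⟩ := Function.ne_iff.mp hx
  exact Finset.sum_pos' (fun m _ => sq_nonneg _)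
    ⟨l, Finset.mem_univ l, by exact pow_pos (abs_pos.mpr hl) 2 |>.trans_eq (sq_abs _)⟩

lemma dk_exists_x {n : ℕ} (i : Fin n) (u w : Fin n → Fin n → ℝ) :
    ∃ x : Fin n → ℝ, x ≠ 0 ∧ (∀ j, i < j → u j ⬝ᵥ x = 0) ∧
      (∀ j, j < i → w j ⬝ᵥ x = 0) := by
  classical
  let dotL : (Fin n → ℝ) → (Fin n → ℝ) →ₗ[ℝ] ℝ := fun v =>
    { toFun := fun x => v ⬝ᵥ x
      map_add' := fun a b => dotProduct_add v a b
      map_smul' := fun c a => dotProduct_smul c v a }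
  let L : (Fin n → ℝ) →ₗ[ℝ] ({j : Fin n // j ≠ i} → ℝ) :=
    LinearMap.pi (fun j => if i < j.1 then dotL (u j.1) else dotL (w j.1))
  have hnotinj : ¬ Function.Injective L := by
    intro hinj
    have hle := LinearMap.finrank_le_finrank_of_injective hinj
    rw [Module.finrank_pi, Module.finrank_pi] at hle
    have hcard : Fintype.card {j : Fin n // j ≠ i} = n - 1 := by
      simp [Fintype.card_subtype_compl, Fintype.card_subtype_eq]
    rw [hcard, Fintype.card_fin] at hle
    have := i.isLt
    omega
  rw [Function.not_injective_iff] at hnotinj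
  obtain ⟨a, b, hab, hne⟩ := hnotinj
  refine ⟨a - b, sub_ne_zero_of_ne hne, ?_, ?_⟩
  · intro j hj
    have := congrFun (show L (a - b) = 0 by rw [map_sub, hab, sub_self]) ⟨j, ne_of_gt hj⟩
    simpa [L, dotL, if_pos hj] using this
  · intro j hj
    have := congrFun (show L (a - b) = 0 by rw [map_sub, hab, sub_self]) ⟨j, ne_of_lt hj⟩
    simpa [L, dotL, if_neg (asymm hj : ¬ i < j)] using this

lemma dk_weyl {n : ℕ} (A B : Matrix (Fin n) (Fin n) ℝ)
    (lamA lamB : Fin n → ℝ) (hlamA : Antitone lamA) (hlamB : Antitone lamB)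
    (vA vB : Fin n → (Fin n → ℝ))
    (hvA : ∀ j k, vA j ⬝ᵥ vA k = if j = k then (1 : ℝ) else 0)
    (hvB : ∀ j k, vB j ⬝ᵥ vB k = if j = k then (1 : ℝ) else 0)
    (heigA : ∀ j, A *ᵥ vA j = lamA j • vA j)
    (heigB : ∀ j, B *ᵥ vB j = lamB j • vB j)
    (i : Fin n) : lamA i - lamB i ≤ ‖A - B‖ := by
  obtain ⟨x, hx0, hxA, hxB⟩ := dk_exists_x i vA vB
  set S := x ⬝ᵥ x with hSdef
  have hS : 0 < S := dk_dot_self_pos hx0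
  have hA' : lamA i * S ≤ x ⬝ᵥ (A *ᵥ x) := by
    rw [dk_E2 hvA heigA x, hSdef, ← dk_E1 hvA x, Finset.mul_sum]
    refine Finset.sum_le_sum fun j _ => ?_
    rcases le_or_gt j i with h | h
    · exact mul_le_mul_of_nonneg_right (hlamA h) (sq_nonneg _)
    · rw [hxA j h]; simp
  have hB' : x ⬝ᵥ (B *ᵥ x) ≤ lamB i * S := by
    rw [dk_E2 hvB heigB x, hSdef, ← dk_E1 hvB x, Finset.mul_sum]
    refine Finset.sum_le_sum fun j _ => ?_
    rcases le_or_gt i j with h | h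
    · exact mul_le_mul_of_nonneg_right (hlamB h) (sq_nonneg _)
    · rw [hxB j h]; simp
  have hcs : x ⬝ᵥ ((A - B) *ᵥ x) ≤ ‖A - B‖ * S := by
    set y := (A - B) *ᵥ x with hy
    have h1 : (x ⬝ᵥ y) ^ 2 ≤ S * (y ⬝ᵥ y) := by
      have := Finset.sum_mul_sq_le_sq_mul_sq Finset.univ x y
      simpa [dotProduct, hSdef, dk_dot_self_eq, sq] using this
    have h2 : y ⬝ᵥ y ≤ ‖A - B‖ ^ 2 * S := dk_opnorm n (A - B) x
    have h3 : (x ⬝ᵥ y) ^ 2 ≤ (‖A - B‖ * S) ^ 2 := by nlinarith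
    have h4 : (0 : ℝ) ≤ ‖A - B‖ * S := by positivity
    nlinarith
  have hsplit : x ⬝ᵥ (A *ᵥ x) = x ⬝ᵥ (B *ᵥ x) + x ⬝ᵥ ((A - B) *ᵥ x) := by
    rw [Matrix.sub_mulVec, dotProduct_sub]; ring
  have : lamA i * S ≤ lamB i * S + ‖A - B‖ * S := by
    calc lamA i * S ≤ x ⬝ᵥ (A *ᵥ x) := hA'
      _ = x ⬝ᵥ (B *ᵥ x) + x ⬝ᵥ ((A - B) *ᵥ x) := hsplit
      _ ≤ lamB i * S + ‖A - B‖ * S := add_le_add hB' hcs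
  nlinarith

theorem stmt_19 (n : ℕ) (A B : Matrix (Fin n) (Fin n) ℝ)
    (hA : A.IsSymm) (hB : B.IsSymm)
    (lamA lamB : Fin n → ℝ) (hlamA : Antitone lamA) (hlamB : Antitone lamB)
    (vA vB : Fin n → (Fin n → ℝ))
    (hvA : ∀ j k, vA j ⬝ᵥ vA k = if j = k then (1 : ℝ) else 0)
    (hvB : ∀ j k, vB j ⬝ᵥ vB k = if j = k then (1 : ℝ) else 0)
    (heigA : ∀ j, A *ᵥ vA j = lamA j • vA j)
    (heigB : ∀ j, B *ᵥ vB j = lamB j • vB j)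
    (i : Fin n) (δ : ℝ)
    (hδ : δ = ⨅ j : {j : Fin n // j ≠ i}, |lamA j - lamA i|)
    (hδpos : 0 < δ) :
    min (∑ l, (vA i l - vB i l) ^ 2) (∑ l, (vA i l + vB i l) ^ 2) ≤
      8 * ‖A - B‖ ^ 2 / δ ^ 2 := by
  classical
  set ε := ‖A - B‖ with hε
  have hε0 : 0 ≤ ε := norm_nonneg _
  set c : Fin n → ℝ := fun j => vA j ⬝ᵥ vB i with hc
  have hsum1 : ∑ j, c j ^ 2 = 1 := by
    rw [hc]; rw [dk_E1 hvA (vB i)]; simp [hvB i i]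
  have hminus : ∑ l, (vA i l - vB i l) ^ 2 = 2 - 2 * c i := by
    have e1 : ∑ l, (vA i l - vB i l) ^ 2 =
        (vA i ⬝ᵥ vA i) - 2 * (vA i ⬝ᵥ vB i) + (vB i ⬝ᵥ vB i) := by
      simp only [dotProduct, Finset.mul_sum, ← Finset.sum_sub_distrib,
        ← Finset.sum_add_distrib]
      exact Finset.sum_congr rfl fun l _ => by ring
    rw [e1, hvA i i, hvB i i]; simp [hc]; ring
  have hplus : ∑ l, (vA i l + vB i l) ^ 2 = 2 + 2 * c i := by
    have e1 : ∑ l, (vA i l + vB i l) ^ 2 =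
        (vA i ⬝ᵥ vA i) + 2 * (vA i ⬝ᵥ vB i) + (vB i ⬝ᵥ vB i) := by
      simp only [dotProduct, Finset.mul_sum, ← Finset.sum_add_distrib]
      exact Finset.sum_congr rfl fun l _ => by ring
    rw [e1, hvA i i, hvB i i]; simp [hc]; ring
  have hci2 : c i ^ 2 ≤ 1 := by
    rw [← hsum1]
    exact Finset.single_le_sum (f := fun j => c j ^ 2)
      (fun j _ => sq_nonneg _) (Finset.mem_univ i)
  have hweyl : |lamA i - lamB i| ≤ ε := by
    rw [abs_le]
    constructor
    · have h := dk_weyl B A lamB lamA hlamB hlamA vB vA hvB hvA heigB heigA i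
      rw [norm_sub_rev] at h
      linarith
    · exact dk_weyl A B lamA lamB hlamA hlamB vA vB hvA hvB heigA heigB i
  have hgap : ∀ j, j ≠ i → δ ≤ |lamA j - lamA i| := by
    intro j hj
    rw [hδ]
    have hbdd : BddBelow (Set.range fun j : {j : Fin n // j ≠ i} => |lamA j.1 - lamA i|) :=
      ⟨0, by rintro y ⟨j', rfl⟩; exact abs_nonneg _⟩
    exact ciInf_le hbdd ⟨j, hj⟩
  have hd : ∑ j, ((lamA j - lamB i) * c j) ^ 2 ≤ ε ^ 2 := by
    have hyj : ∀ j, vA j ⬝ᵥ ((A - B) *ᵥ vB i) = (lamA j - lamB i) * c j := by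
      intro j
      rw [Matrix.sub_mulVec, dotProduct_sub, heigB i, dotProduct_smul]
      have h1 : vA j ⬝ᵥ (A *ᵥ vB i) = lamA j * (vA j ⬝ᵥ vB i) := by
        rw [Matrix.dotProduct_mulVec, ← Matrix.mulVec_transpose, hA.eq, heigA j,
          smul_dotProduct]
        rfl
      rw [h1, hc]
      simp only [smul_eq_mul]
      ring
    calc ∑ j, ((lamA j - lamB i) * c j) ^ 2
        = ∑ j, (vA j ⬝ᵥ ((A - B) *ᵥ vB i)) ^ 2 := by
          exact Finset.sum_congr rfl fun j _ => by rw [hyj j]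
      _ = ((A - B) *ᵥ vB i) ⬝ᵥ ((A - B) *ᵥ vB i) := dk_E1 hvA _
      _ ≤ ε ^ 2 * (vB i ⬝ᵥ vB i) := dk_opnorm n (A - B) (vB i)
      _ = ε ^ 2 := by rw [hvB i i]; simp
  have hδ2 : (0 : ℝ) < δ ^ 2 := by positivity
  rcases le_or_gt δ (2 * ε) with hcase | hcase
  · -- large perturbation: RHS ≥ 2
    rcases le_or_gt 0 (c i) with hsign | hsign
    · refine le_trans (min_le_left _ _) ?_
      rw [hminus, le_div_iff₀ hδ2]
      nlinarith
    · refine le_trans (min_le_right _ _) ?_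
      rw [hplus, le_div_iff₀ hδ2]
      nlinarith
  · -- small perturbation
    have key : (δ / 2) ^ 2 * (1 - c i ^ 2) ≤ ε ^ 2 := by
      have hsplit : ∑ j ∈ Finset.univ.erase i, c j ^ 2 = 1 - c i ^ 2 := by
        have := Finset.add_sum_erase Finset.univ (fun j => c j ^ 2) (Finset.mem_univ i)
        rw [hsum1] at this
        linarith [this]
      have hterm : ∀ j ∈ Finset.univ.erase i,
          (δ / 2) ^ 2 * c j ^ 2 ≤ ((lamA j - lamB i) * c j) ^ 2 := by
        intro j hj
        have hjne : j ≠ i := Finset.ne_of_mem_erase hj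
        have h1 : δ / 2 ≤ |lamA j - lamB i| := by
          have htri : |lamA j - lamA i| ≤ |lamA j - lamB i| + |lamB i - lamA i| :=
            abs_sub_le _ _ _
          have habs : |lamB i - lamA i| = |lamA i - lamB i| := abs_sub_comm _ _
          have := hgap j hjne
          linarith [hweyl, htri, habs ▸ htri]
        have h2 : (δ / 2) ^ 2 ≤ (lamA j - lamB i) ^ 2 := by
          have := pow_le_pow_left₀ (by linarith : (0:ℝ) ≤ δ / 2) h1 2
          rwa [sq_abs] at this
        calc (δ / 2) ^ 2 * c j ^ 2 ≤ (lamA j - lamB i) ^ 2 * c j ^ 2 :=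
              mul_le_mul_of_nonneg_right h2 (sq_nonneg _)
          _ = ((lamA j - lamB i) * c j) ^ 2 := by ring
      calc (δ / 2) ^ 2 * (1 - c i ^ 2)
          = ∑ j ∈ Finset.univ.erase i, (δ / 2) ^ 2 * c j ^ 2 := by
            rw [← Finset.mul_sum, hsplit]
        _ ≤ ∑ j ∈ Finset.univ.erase i, ((lamA j - lamB i) * c j) ^ 2 :=
            Finset.sum_le_sum hterm
        _ ≤ ∑ j, ((lamA j - lamB i) * c j) ^ 2 :=
            Finset.sum_le_sum_of_subset_of_nonneg (Finset.erase_subset _ _)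
              (fun j _ _ => sq_nonneg _)
        _ ≤ ε ^ 2 := hd
    rcases le_or_gt 0 (c i) with hsign | hsign
    · refine le_trans (min_le_left _ _) ?_
      rw [hminus, le_div_iff₀ hδ2]
      nlinarith [sq_nonneg (c i), hci2, key, hδpos]
    · refine le_trans (min_le_right _ _) ?_
      rw [hplus, le_div_iff₀ hδ2]
      nlinarith [sq_nonneg (c i), hci2, key, hδpos]
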